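/- Let C be a closed cone in the space Sym_d(ℝ) of real symmetric d×d matrices such that tr(h) > 0 for every nonzero h ∈ C. Then there exists a neighborhood W of 0 in Sym_d(ℝ) such that every nonzero h ∈ W ∩ C satisfies det(I_d + h) > 1. -/

import Mathlib

/-!
The determinant is differentiable at `1` with derivative the trace, so
`det (1 + h) = 1 + tr h + o(‖h‖)`. Since `C ∩ sphere 0 1` is compact and the trace is positive
on it, homogeneity gives `c > 0` with `c ‖h‖ ≤ tr h` on all of `C`, and this linear lower bound
dominates the remainder near `0`.
-/

open Matrix Polynomial Set Metric

attribute [local instance] Matrix.normedAddCommGroup Matrix.normedSpace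

theorem exists_pos_mul_norm_le_of_cone {E : Type*} [NormedAddCommGroup E] [NormedSpace ℝ E]
    [ProperSpace E] {C : Set E} (hCclosed : IsClosed C)
    (hCcone : ∀ x ∈ C, ∀ c : ℝ, 0 < c → c • x ∈ C) (f : E →L[ℝ] ℝ)
    (hf : ∀ x ∈ C, x ≠ 0 → 0 < f x) : ∃ c > 0, ∀ x ∈ C, c * ‖x‖ ≤ f x := by
  have hS : IsCompact (C ∩ sphere 0 1) := (isCompact_sphere 0 1).inter_left hCclosed
  obtain ⟨c, hc, hcS⟩ := hS.exists_forall_le' f.continuous.continuousOn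
    fun x hx => hf x hx.1 (ne_zero_of_mem_unit_sphere ⟨x, hx.2⟩)
  refine ⟨c, hc, fun x hx => ?_⟩
  rcases eq_or_ne x 0 with rfl | hx0
  · simp
  have hnorm : 0 < ‖x‖ := norm_pos_iff.mpr hx0
  have hunit : ‖x‖⁻¹ • x ∈ C ∩ sphere 0 1 :=
    ⟨hCcone x hx _ (inv_pos.mpr hnorm), by simp [norm_smul, hnorm.ne']⟩
  calc c * ‖x‖ ≤ f (‖x‖⁻¹ • x) * ‖x‖ := by gcongr; exact hcS _ hunit
    _ = f x := by rw [map_smul, smul_eq_mul]; field_simp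

namespace Matrix

variable {n 𝕜 : Type*} [Fintype n] [DecidableEq n] [NontriviallyNormedField 𝕜]

theorem hasDerivAt_det_one_add_smul (M : Matrix n n 𝕜) :
    HasDerivAt (fun r : 𝕜 => (1 + r • M).det) M.trace 0 := by
  have hpoly : (fun r : 𝕜 => (1 + r • M).det) =
      fun r => (det (1 + (X : 𝕜[X]) • M.map C)).eval r := by
    funext r
    simp [eval_det, ← smul_eq_mul_diagonal]
  rw [hpoly, ← derivative_det_one_add_X_smul]
  exact Polynomial.hasDerivAt _ _

theorem hasFDerivAt_det_one [CompleteSpace 𝕜] :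
    HasFDerivAt (fun M : Matrix n n 𝕜 => M.det)
      (LinearMap.toContinuousLinearMap (traceLinearMap n 𝕜 𝕜)) 1 := by
  have hdiff : Differentiable 𝕜 (fun M : Matrix n n 𝕜 => M.det) := by
    simp_rw [det_apply]
    fun_prop
  convert (hdiff 1).hasFDerivAt using 1
  ext M
  have hline : HasDerivAt (fun r : 𝕜 => 1 + r • M) M 0 :=
    ((hasDerivAt_id' (0 : 𝕜)).smul_const M).const_add 1 |>.congr_deriv (one_smul _ _)
  have hcomp := (hdiff (1 + (0 : 𝕜) • M)).hasFDerivAt.comp_hasDerivAt 0 hline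
  rw [zero_smul, add_zero] at hcomp
  exact (hasDerivAt_det_one_add_smul M).unique hcomp

end Matrix

theorem det_one_add_gt_one_of_cone {d : ℕ}
    (C : Set (Matrix (Fin d) (Fin d) ℝ))
    (hCclosed : IsClosed C)
    (hCcone : ∀ h ∈ C, ∀ c : ℝ, 0 < c → c • h ∈ C)
    (hCtrace : ∀ h ∈ C, h ≠ 0 → 0 < h.trace) :
    ∃ W ∈ nhds (0 : Matrix (Fin d) (Fin d) ℝ),
      ∀ h ∈ W ∩ C, h ≠ 0 → 1 < (1 + h).det := by
  obtain ⟨c, hc, htrace_ge⟩ := exists_pos_mul_norm_le_of_cone hCclosed hCcone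
    (LinearMap.toContinuousLinearMap (traceLinearMap (Fin d) ℝ ℝ)) hCtrace
  have hremainder := hasFDerivAt_iff_isLittleO_nhds_zero.mp
    (hasFDerivAt_det_one (n := Fin d) (𝕜 := ℝ))
  refine ⟨_, hremainder.def (half_pos hc), fun h ⟨hW, hC⟩ hne => ?_⟩
  have hrem : ‖(1 + h).det - det 1 - h.trace‖ ≤ c / 2 * ‖h‖ := hW
  rw [det_one, Real.norm_eq_abs] at hrem
  have htrace : c * ‖h‖ ≤ h.trace := htrace_ge h hC
  have hnorm : 0 < ‖h‖ := norm_pos_iff.mpr hne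
  linarith [(abs_le.mp hrem).1, mul_pos hc hnorm]
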